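/- arXiv:2504.12174 — 3 statements merged into one kernel-verified Lean document; each statement's English description precedes it below -/
import Mathlib

section
/- Let N be the free 2-step nilpotent group on four generators a₀, a₁, b₀, b₁. If an element of the form [a₀,b₁]^{d₁}·[b₀,a₁]^{d₂} (with d₁, d₂ ∈ ℤ) is a commutator of two elements of N, then d₁ = 0 or d₂ = 0. -/
/-!
Let `H` be the group of pairs `(u, m)` with `u ∈ ℤ⁴`, `m ∈ M₄(ℤ)` and product
`(u, m) (u', m') = (u + u', m + m' + u u'ᵀ)`. It is 2-step nilpotent, so sending the generators
to `(eᵢ, 0)` defines a homomorphism `N → H`; it maps a commutator `[g, h]` to `(0, u ∧ v)` with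
`u ∧ v = u vᵀ - v uᵀ`. A decomposable bivector satisfies the Plücker relation
`w₀₁ w₂₃ - w₀₂ w₁₃ + w₀₃ w₁₂ = 0`, while `[a₀, b₁]^d₁ [b₀, a₁]^d₂` maps to
`d₁ e₀ ∧ e₃ + d₂ e₂ ∧ e₁`, whose Plücker form is `-d₁ d₂`.
-/

open scoped commutatorElement
open Matrix

theorem MonoidHom.top_lowerCentralSeries_two_le_ker {G H : Type*} [Group G] [Group H]
    (hH : commutator H ≤ Subgroup.center H) (f : G →* H) :
    (⊤ : Subgroup G).lowerCentralSeries 2 ≤ f.ker := by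
  rw [← Subgroup.map_eq_bot_iff, Subgroup.map_lowerCentralSeries, eq_bot_iff,
    ← (⊤ : Subgroup H).lowerCentralSeries_succ_eq_bot (n := 1) hH]
  exact Subgroup.lowerCentralSeries_mono 2 le_top

def vecWedge {ι R : Type*} [NonUnitalNonAssocRing R] (u v : ι → R) : Matrix ι ι R :=
  vecMulVec u v - vecMulVec v u

@[ext]
structure Heisenberg (ι R : Type*) where
  u : ι → R
  m : Matrix ι ι R

namespace Heisenberg

variable {ι R : Type*} [NonUnitalNonAssocRing R]

instance : Mul (Heisenberg ι R) := ⟨fun x y => ⟨x.u + y.u, x.m + y.m + vecMulVec x.u y.u⟩⟩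
instance : One (Heisenberg ι R) := ⟨⟨0, 0⟩⟩
instance : Inv (Heisenberg ι R) := ⟨fun x => ⟨-x.u, -x.m + vecMulVec x.u x.u⟩⟩

@[simp] lemma mul_u (x y : Heisenberg ι R) : (x * y).u = x.u + y.u := rfl
@[simp] lemma mul_m (x y : Heisenberg ι R) : (x * y).m = x.m + y.m + vecMulVec x.u y.u := rfl
@[simp] lemma one_u : (1 : Heisenberg ι R).u = 0 := rfl
@[simp] lemma one_m : (1 : Heisenberg ι R).m = 0 := rfl
@[simp] lemma inv_u (x : Heisenberg ι R) : x⁻¹.u = -x.u := rfl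
@[simp] lemma inv_m (x : Heisenberg ι R) : x⁻¹.m = -x.m + vecMulVec x.u x.u := rfl

instance : Group (Heisenberg ι R) where
  mul_assoc x y z := by
    apply Heisenberg.ext <;> simp only [mul_u, mul_m, add_vecMulVec, vecMulVec_add] <;> abel
  one_mul x := by apply Heisenberg.ext <;> simp
  mul_one x := by apply Heisenberg.ext <;> simp
  inv_mul_cancel x := by apply Heisenberg.ext <;> simp [neg_vecMulVec]

lemma commutatorElement_eq (x y : Heisenberg ι R) : ⁅x, y⁆ = ⟨0, vecWedge x.u y.u⟩ := by
  apply Heisenberg.ext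
  · simp [commutatorElement_def]
  · simp only [commutatorElement_def, mul_m, mul_u, inv_m, inv_u, add_vecMulVec,
      neg_vecMulVec, vecMulVec_neg, vecWedge]
    abel

lemma mem_center_of_u_eq_zero {x : Heisenberg ι R} (hx : x.u = 0) :
    x ∈ Subgroup.center (Heisenberg ι R) :=
  Subgroup.mem_center_iff.mpr fun y => by apply Heisenberg.ext <;> simp [hx, add_comm]

lemma commutator_le_center : commutator (Heisenberg ι R) ≤ Subgroup.center (Heisenberg ι R) := by
  rw [commutator_def, Subgroup.commutator_le]
  intro x _ y _
  exact mem_center_of_u_eq_zero (by rw [commutatorElement_eq])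

def centralHom : Multiplicative (Matrix ι ι R) →* Heisenberg ι R where
  toFun w := ⟨0, w.toAdd⟩
  map_one' := rfl
  map_mul' x y := by apply Heisenberg.ext <;> simp

lemma central_zpow (w : Matrix ι ι R) (d : ℤ) : (⟨0, w⟩ : Heisenberg ι R) ^ d = ⟨0, d • w⟩ :=
  (map_zpow centralHom (Multiplicative.ofAdd w) d).symm

end Heisenberg

noncomputable def freeNilpotentToHeisenberg (ι : Type*) [DecidableEq ι] :
    FreeGroup ι ⧸ (⊤ : Subgroup (FreeGroup ι)).lowerCentralSeries 2 →* Heisenberg ι ℤ :=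
  QuotientGroup.lift _ (FreeGroup.lift fun i => ⟨Pi.single i 1, 0⟩)
    (MonoidHom.top_lowerCentralSeries_two_le_ker Heisenberg.commutator_le_center _)

lemma freeNilpotentToHeisenberg_mk_of {ι : Type*} [DecidableEq ι] (i : ι) :
    freeNilpotentToHeisenberg ι (QuotientGroup.mk (FreeGroup.of i)) = ⟨Pi.single i 1, 0⟩ :=
  (QuotientGroup.lift_mk' _ _ _).trans FreeGroup.lift_apply_of

def plueckerForm {R : Type*} [CommRing R] (w : Matrix (Fin 4) (Fin 4) R) : R :=
  w 0 1 * w 2 3 - w 0 2 * w 1 3 + w 0 3 * w 1 2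

lemma plueckerForm_vecWedge {R : Type*} [CommRing R] (u v : Fin 4 → R) :
    plueckerForm (vecWedge u v) = 0 := by
  simp only [plueckerForm, vecWedge, Matrix.sub_apply, vecMulVec_apply]
  ring

lemma plueckerForm_zsmul_vecWedge_add_zsmul_vecWedge (d₁ d₂ : ℤ) :
    plueckerForm (d₁ • vecWedge (Pi.single 0 1) (Pi.single 3 1) +
      d₂ • vecWedge (Pi.single 2 1) (Pi.single 1 1)) = -(d₁ * d₂) := by
  simp only [plueckerForm, vecWedge, Matrix.add_apply, Matrix.smul_apply, Matrix.sub_apply,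
    vecMulVec_apply, Pi.single_apply]
  simp

theorem stmt2
    (a₀ a₁ b₀ b₁ : FreeGroup (Fin 4) ⧸ (⊤ : Subgroup (FreeGroup (Fin 4))).lowerCentralSeries 2)
    (ha₀ : a₀ = QuotientGroup.mk (FreeGroup.of 0))
    (ha₁ : a₁ = QuotientGroup.mk (FreeGroup.of 1))
    (hb₀ : b₀ = QuotientGroup.mk (FreeGroup.of 2))
    (hb₁ : b₁ = QuotientGroup.mk (FreeGroup.of 3))
    (d₁ d₂ : ℤ)
    (hcomm : ∃ g h : FreeGroup (Fin 4) ⧸ (⊤ : Subgroup (FreeGroup (Fin 4))).lowerCentralSeries 2,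
      ⁅a₀, b₁⁆ ^ d₁ * ⁅b₀, a₁⁆ ^ d₂ = ⁅g, h⁆) :
    d₁ = 0 ∨ d₂ = 0 := by
  obtain ⟨g, h, hgh⟩ := hcomm
  have hm := congrArg (fun x => (freeNilpotentToHeisenberg (Fin 4) x).m) hgh
  simp only [map_mul, map_zpow, map_commutatorElement, ha₀, ha₁, hb₀, hb₁,
    freeNilpotentToHeisenberg_mk_of, Heisenberg.commutatorElement_eq, Heisenberg.central_zpow,
    Heisenberg.mul_m, zero_vecMulVec, add_zero] at hm
  have hpf := congrArg plueckerForm hm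
  rw [plueckerForm_zsmul_vecWedge_add_zsmul_vecWedge, plueckerForm_vecWedge, neg_eq_zero] at hpf
  exact mul_eq_zero.mp hpf
end

section
/- Let G = D ⋊_φ ℤ be a semidirect product where φ: ℤ → Aut(D). For g₂ = (h₂, n) with n ≠ 0, the conjugacy class of g₂ in G equals the union over i = 0, …, |n|−1 of the D-conjugacy classes of the conjugates t^i g₂ t^{-i}, where t = (1, 1). -/
/-!
Write `N` for the normal subgroup `D` of `G`. If `x⁻¹ y ∈ N ⊔ C(g)`, then `y g y⁻¹` is an
`N`-conjugate of `x g x⁻¹`. For `g = (h₂, n)` we have `t ^ n = (h₂, 0)⁻¹ g ∈ N ⊔ C(g)`, so every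
element whose `ℤ`-component is divisible by `n` lies in `N ⊔ C(g)`. Hence conjugating `g` by
`c` with `ℤ`-component `m` gives an `N`-conjugate of `t ^ i g t ^ (-i)`, where `i = m mod |n|`.
-/

open SemidirectProduct Multiplicative

theorem Subgroup.exists_conj_eq_of_inv_mul_mem_sup_centralizer {G : Type*} [Group G]
    {N : Subgroup G} [hN : N.Normal] {g x y : G}
    (h : x⁻¹ * y ∈ N ⊔ Subgroup.centralizer {g}) :
    ∃ k ∈ N, y * g * y⁻¹ = k * (x * g * x⁻¹) * k⁻¹ := by
  obtain ⟨k, hk, c, hc, hkc⟩ := Subgroup.mem_sup_of_normal_left.mp h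
  have hy : y = x * k * c := by rw [mul_assoc, hkc, mul_inv_cancel_left]
  have hcg : c * g * c⁻¹ = g := by
    rw [Subgroup.mem_centralizer_singleton_iff.mp hc, mul_inv_cancel_right]
  refine ⟨x * k * x⁻¹, hN.conj_mem k hk x, ?_⟩
  calc y * g * y⁻¹ = x * k * (c * g * c⁻¹) * k⁻¹ * x⁻¹ := by rw [hy]; group
    _ = x * k * x⁻¹ * (x * g * x⁻¹) * (x * k * x⁻¹)⁻¹ := by rw [hcg]; group

namespace SemidirectProduct

variable {N H : Type*} [Group N] [Group H] {φ : H →* MulAut N}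

theorem mem_ker_rightHom_sup_centralizer {g x : N ⋊[φ] H}
    (hx : rightHom x ∈ Subgroup.zpowers (rightHom g)) :
    x ∈ (rightHom : N ⋊[φ] H →* H).ker ⊔ Subgroup.centralizer {g} := by
  have hinl : ∀ n : N, inl n ∈ (rightHom : N ⋊[φ] H →* H).ker ⊔ Subgroup.centralizer {g} :=
    fun n => Subgroup.mem_sup_left (by simp)
  have hg : inr g.right = (inl g.left)⁻¹ * g := by
    rw [eq_inv_mul_iff_mul_eq, inl_left_mul_inr_right]
  obtain ⟨q, hq⟩ := hx
  rw [rightHom_eq_right] at hq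
  rw [← inl_left_mul_inr_right x, ← hq, map_zpow, hg]
  exact Subgroup.mul_mem _ (hinl _) <| Subgroup.zpow_mem _
    (Subgroup.mul_mem _ (Subgroup.inv_mem _ (hinl _))
      (Subgroup.mem_sup_right (Subgroup.mem_centralizer_singleton_iff.mpr rfl))) q

end SemidirectProduct

theorem Int.exists_lt_natAbs_dvd_sub {n : ℤ} (hn : n ≠ 0) (m : ℤ) :
    ∃ i < n.natAbs, n ∣ m - i :=
  ⟨(m % n).toNat, by
    have := Int.emod_lt_abs m hn; rw [Int.abs_eq_natAbs] at this; omega, by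
    rw [Int.toNat_of_nonneg (Int.emod_nonneg m hn)]; exact Int.dvd_self_sub_emod⟩

theorem stmt5 (D : Type*) [Group D] (φ : Multiplicative ℤ →* MulAut D)
    (h₂ : D) (n : ℤ) (hn : n ≠ 0) :
    conjugatesOf (⟨h₂, Multiplicative.ofAdd n⟩ : D ⋊[φ] Multiplicative ℤ) =
      ⋃ i ∈ Finset.range n.natAbs,
        Set.range (fun d : D =>
          (⟨d, 1⟩ : D ⋊[φ] Multiplicative ℤ) *
            ((⟨1, Multiplicative.ofAdd 1⟩ : D ⋊[φ] Multiplicative ℤ) ^ i *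
              (⟨h₂, Multiplicative.ofAdd n⟩ : D ⋊[φ] Multiplicative ℤ) *
              ((⟨1, Multiplicative.ofAdd 1⟩ : D ⋊[φ] Multiplicative ℤ) ^ i)⁻¹) *
            (⟨d, 1⟩ : D ⋊[φ] Multiplicative ℤ)⁻¹) := by
  ext x
  simp only [Set.mem_iUnion, Set.mem_range, Finset.mem_range, exists_prop]
  constructor
  · intro hx
    obtain ⟨c, rfl⟩ := isConj_iff.mp hx
    obtain ⟨i, hi, q, hq⟩ := Int.exists_lt_natAbs_dvd_sub hn (toAdd c.right)
    have hright : rightHom ((inr (ofAdd 1) ^ i)⁻¹ * c : D ⋊[φ] Multiplicative ℤ) = ofAdd n ^ q := by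
      apply toAdd.injective
      simp only [map_mul, map_inv, map_pow, rightHom_inr, rightHom_eq_right, toAdd_mul, toAdd_inv,
        toAdd_pow, toAdd_zpow, toAdd_ofAdd, nsmul_eq_mul, Int.zsmul_eq_mul, mul_one]
      linarith [mul_comm n q]
    have hmem := mem_ker_rightHom_sup_centralizer (g := ⟨h₂, ofAdd n⟩) ⟨q, hright.symm⟩
    obtain ⟨k, hk, hconj⟩ := Subgroup.exists_conj_eq_of_inv_mul_mem_sup_centralizer hmem
    rw [← range_inl_eq_ker_rightHom] at hk
    obtain ⟨e, rfl⟩ := hk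
    exact ⟨i, hi, e, hconj.symm⟩
  · rintro ⟨i, -, d, rfl⟩
    exact isConj_iff.mpr ⟨⟨d, 1⟩ * ⟨1, ofAdd 1⟩ ^ i, by group⟩
end

section
/- Let G = D ⋊_φ ℤ with D abelian, and let t = (1,1). For g₁ = (h₁, n) and g₂ = (h₂, n) in G with n ≠ 0, if there exists (h, m) ∈ G with (h,m)·g₁·(h,m)⁻¹ = g₂, then there exist i ∈ {0, …, |n|−1} and h' ∈ D with (h',0)·(t^i g₁ t^{-i})·(h',0)⁻¹ = g₂. -/
theorem stmt16 (D : Type*) [CommGroup D] (φ : Multiplicative ℤ →* MulAut D)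
    (h₁ h₂ : D) (n : ℤ) (hn : n ≠ 0)
    (hconj : ∃ (h : D) (m : ℤ),
      (⟨h, Multiplicative.ofAdd m⟩ : D ⋊[φ] Multiplicative ℤ) *
        ⟨h₁, Multiplicative.ofAdd n⟩ *
        (⟨h, Multiplicative.ofAdd m⟩ : D ⋊[φ] Multiplicative ℤ)⁻¹ =
        ⟨h₂, Multiplicative.ofAdd n⟩) :
    ∃ i < n.natAbs, ∃ h' : D,
      (⟨h', 1⟩ : D ⋊[φ] Multiplicative ℤ) *
        ((⟨1, Multiplicative.ofAdd 1⟩ : D ⋊[φ] Multiplicative ℤ) ^ i *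
          (⟨h₁, Multiplicative.ofAdd n⟩ : D ⋊[φ] Multiplicative ℤ) *
          ((⟨1, Multiplicative.ofAdd 1⟩ : D ⋊[φ] Multiplicative ℤ) ^ i)⁻¹) *
        (⟨h', 1⟩ : D ⋊[φ] Multiplicative ℤ)⁻¹ =
        ⟨h₂, Multiplicative.ofAdd n⟩ := by
  obtain ⟨h, m, hc⟩ := hconj
  set g : D ⋊[φ] Multiplicative ℤ := ⟨h₁, Multiplicative.ofAdd n⟩ with hg
  set c : D ⋊[φ] Multiplicative ℤ := ⟨h, Multiplicative.ofAdd m⟩ with hcdef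
  have hna : (0:ℤ) < (n.natAbs : ℤ) := by
    exact_mod_cast Nat.pos_of_ne_zero (Int.natAbs_ne_zero.mpr hn)
  set r : ℤ := m % (n.natAbs : ℤ) with hrdef
  have hr0 : 0 ≤ r := Int.emod_nonneg _ (by exact_mod_cast hna.ne')
  have hrlt : r < (n.natAbs : ℤ) := Int.emod_lt_of_pos _ hna
  have hdvd : n ∣ (r - m) := by
    have h1 : (n.natAbs : ℤ) ∣ (m - r) := Int.dvd_self_sub_of_emod_eq rfl
    have h2 : n ∣ (m - r) := (Int.natAbs_dvd).mp h1
    simpa using h2.neg_right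
  set q : ℤ := (r - m) / n with hqdef
  have hq : n * q = r - m := Int.mul_ediv_cancel' hdvd
  set c' : D ⋊[φ] Multiplicative ℤ := c * g ^ q with hc'def
  have key : c' * g * c'⁻¹ = ⟨h₂, Multiplicative.ofAdd n⟩ := by
    have : c' * g * c'⁻¹ = c * g * c⁻¹ := by rw [hc'def]; group
    rw [this, hc]
  have hright : c'.right = Multiplicative.ofAdd r := by
    have : c'.right = c.right * g.right ^ q := by
      rw [hc'def]
      rw [SemidirectProduct.mul_right]
      congr 1
      exact map_zpow SemidirectProduct.rightHom g q
    rw [this]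
    show Multiplicative.ofAdd m * Multiplicative.ofAdd n ^ q = Multiplicative.ofAdd r
    rw [← ofAdd_zsmul, ← ofAdd_add]
    congr 1
    have : q • n = n * q := by rw [smul_eq_mul, mul_comm]
    rw [this, hq]; ring
  refine ⟨r.toNat, ?_, c'.left, ?_⟩
  · have h3 : (r.toNat : ℤ) < (n.natAbs : ℤ) := by rwa [Int.toNat_of_nonneg hr0]
    exact_mod_cast h3
  · have ht : (⟨1, Multiplicative.ofAdd 1⟩ : D ⋊[φ] Multiplicative ℤ) ^ r.toNat =
        ⟨1, Multiplicative.ofAdd r⟩ := by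
      have h1 : (⟨1, Multiplicative.ofAdd 1⟩ : D ⋊[φ] Multiplicative ℤ) =
          SemidirectProduct.inr (Multiplicative.ofAdd 1) := rfl
      rw [h1, ← map_pow]
      rw [← ofAdd_nsmul, nsmul_eq_mul, mul_one]
      rw [Int.toNat_of_nonneg hr0]
      rfl
    have hsplit : (⟨c'.left, 1⟩ : D ⋊[φ] Multiplicative ℤ) *
        ⟨1, Multiplicative.ofAdd r⟩ = c' := by
      ext
      · show c'.left * φ 1 1 = c'.left
        simp
      · show (1 : Multiplicative ℤ) * Multiplicative.ofAdd r = c'.right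
        rw [hright, one_mul]
    rw [ht]
    calc (⟨c'.left, 1⟩ : D ⋊[φ] Multiplicative ℤ) *
          ((⟨1, Multiplicative.ofAdd r⟩ : D ⋊[φ] Multiplicative ℤ) * g *
            (⟨1, Multiplicative.ofAdd r⟩ : D ⋊[φ] Multiplicative ℤ)⁻¹) *
          (⟨c'.left, 1⟩ : D ⋊[φ] Multiplicative ℤ)⁻¹
        = (⟨c'.left, 1⟩ * ⟨1, Multiplicative.ofAdd r⟩ : D ⋊[φ] Multiplicative ℤ) * g *
          ((⟨c'.left, 1⟩ : D ⋊[φ] Multiplicative ℤ) * ⟨1, Multiplicative.ofAdd r⟩)⁻¹ := by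
          group
      _ = c' * g * c'⁻¹ := by rw [hsplit]
      _ = _ := key
end
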